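/- arXiv:1402.0860 — 5 statements merged into one kernel-verified Lean document; each statement's English description precedes it below -/
import Mathlib

section
/- For any finite simple graph G, the minimum number τ(G) of edge-disjoint complete bipartite subgraphs needed to partition the edge set of G is at least max{n₊, n₋}, where n₊ and n₋ are the numbers of positive and negative eigenvalues of the adjacency matrix of G. -/
open Finset

/-- `A i`, `B i` (for `i : Fin k`) form a bipartite decomposition of `G`:
each pair forms a complete bipartite subgraph of `G`, and every edge of `G`
lies in exactly one of these complete bipartite subgraphs. -/
def IsBipDecomp {V : Type*} [DecidableEq V] (G : SimpleGraph V)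
    {k : ℕ} (A B : Fin k → Finset V) : Prop :=
  (∀ i, Disjoint (A i) (B i)) ∧
  (∀ i, ∀ a ∈ A i, ∀ b ∈ B i, G.Adj a b) ∧
  ∀ e ∈ G.edgeSet, ∃! i : Fin k, e ∈ (A i ×ˢ B i).image fun p => s(p.1, p.2)

/-!
With `a i`, `b i` the indicator vectors of `A i`, `B i`, a bipartite decomposition writes the
adjacency matrix as `∑ i, (a i b iᵀ + b i a iᵀ)`, so its quadratic form `2 ∑ i, (a i ⬝ x) (b i ⬝ x)`
vanishes on the subspace `{x | ∀ i, a i ⬝ x = 0}` of codimension at most `k`. The form is positive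
definite on the span of the eigenvectors with positive eigenvalues, so this span meets the subspace
only in `0` and has dimension at most `k`; the same holds for the negative eigenvalues.
-/

open Matrix

namespace Matrix.IsHermitian

variable {n : Type*} [Fintype n] [DecidableEq n] {M : Matrix n n ℝ} (hM : M.IsHermitian)
include hM

theorem eigenvectorUnitary_mulVec_dotProduct_mulVec (c : n → ℝ) :
    (hM.eigenvectorUnitary : Matrix n n ℝ) *ᵥ c ⬝ᵥ
        M *ᵥ ((hM.eigenvectorUnitary : Matrix n n ℝ) *ᵥ c) = ∑ j, hM.eigenvalues j * c j ^ 2 := by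
  set U := (hM.eigenvectorUnitary : Matrix n n ℝ)
  have hdiag : Uᵀ * M * U = diagonal hM.eigenvalues := by
    simpa [U, star_eq_conjTranspose, conjTranspose_eq_transpose_of_trivial]
      using hM.conjStarAlgAut_star_eigenvectorUnitary
  calc U *ᵥ c ⬝ᵥ M *ᵥ (U *ᵥ c) = c ⬝ᵥ (Uᵀ * M * U) *ᵥ c := by
        rw [← mulVec_mulVec, ← mulVec_mulVec, dotProduct_mulVec c, vecMul_transpose]
    _ = ∑ j, hM.eigenvalues j * c j ^ 2 := by
        simp only [hdiag, dotProduct, mulVec_diagonal]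
        exact sum_congr rfl fun j _ => by ring

theorem card_le_finrank_of_dotProduct_mulVec_eq_zero {W : Type*} [AddCommGroup W] [Module ℝ W]
    [FiniteDimensional ℝ W] (L : (n → ℝ) →ₗ[ℝ] W) (hL : ∀ x, L x = 0 → x ⬝ᵥ M *ᵥ x = 0)
    {S : Finset n} {ε : ℝ} (hS : ∀ j ∈ S, 0 < ε * hM.eigenvalues j) :
    #S ≤ Module.finrank ℝ W := by
  by_contra! hlt
  set U := (hM.eigenvectorUnitary : Matrix n n ℝ)
  let extend := Function.ExtendByZero.linearMap ℝ (Subtype.val : S → n)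
  obtain ⟨c, hc, hc0⟩ := Submodule.exists_mem_ne_zero_of_ne_bot
    ((L ∘ₗ U.mulVecLin ∘ₗ extend).ker_ne_bot_of_finrank_lt (by simpa using hlt))
  set d := extend c
  have hLd : L (U *ᵥ d) = 0 := hc
  have hd0 : d ≠ 0 := fun h => hc0 <|
    Function.extend_injective Subtype.val_injective (0 : n → ℝ) (h.trans extend.map_zero.symm)
  have hsupp : ∀ j ∉ S, d j = 0 := fun j hj =>
    Function.extend_apply' _ _ _ fun ⟨i, hi⟩ => hj (hi ▸ i.2)
  have hpos : 0 < ε * ∑ j, hM.eigenvalues j * d j ^ 2 := by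
    obtain ⟨j, hj⟩ := Function.ne_iff.1 hd0
    have hjS : j ∈ S := by_contra fun h => hj (hsupp j h)
    rw [mul_sum]
    refine sum_pos' (fun i _ => ?_) ⟨j, mem_univ j, ?_⟩
    · by_cases hi : i ∈ S
      · rw [← mul_assoc]; exact mul_nonneg (hS i hi).le (sq_nonneg _)
      · simp [hsupp i hi]
    · rw [← mul_assoc]; exact mul_pos (hS j hjS) (pow_two_pos_of_ne_zero hj)
  rw [← eigenvectorUnitary_mulVec_dotProduct_mulVec, hL _ hLd, mul_zero] at hpos
  exact hpos.false

end Matrix.IsHermitian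

theorem Finset.mk_mem_image_product_iff {V : Type*} [DecidableEq V] {A B : Finset V} {a b : V} :
    s(a, b) ∈ (A ×ˢ B).image (fun p => s(p.1, p.2)) ↔ a ∈ A ∧ b ∈ B ∨ b ∈ A ∧ a ∈ B := by
  simp only [mem_image, mem_product, Prod.exists, Sym2.eq_iff]
  aesop

def membershipMatrix (R : Type*) [Zero R] [One R] {ι V : Type*} [DecidableEq V]
    (A : ι → Finset V) : Matrix ι V R :=
  Matrix.of fun i v => if v ∈ A i then 1 else 0

namespace IsBipDecomp

variable {V : Type*} [DecidableEq V] {G : SimpleGraph V} [DecidableRel G.Adj]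
  {k : ℕ} {A B : Fin k → Finset V}

theorem card_filter_mem (hdec : IsBipDecomp G A B) (a b : V) :
    #{i | s(a, b) ∈ (A i ×ˢ B i).image fun p => s(p.1, p.2)} = if G.Adj a b then 1 else 0 := by
  obtain ⟨-, hadj, huniq⟩ := hdec
  split_ifs with hab
  · obtain ⟨i, hi, hunique⟩ := huniq s(a, b) hab
    refine card_eq_one.2 ⟨i, ext fun j => ?_⟩
    simp only [mem_filter, mem_univ, true_and, mem_singleton]
    exact ⟨hunique j, fun h => h ▸ hi⟩
  · refine card_eq_zero.2 (filter_eq_empty_iff.2 fun i _ hi => hab ?_)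
    rcases mk_mem_image_product_iff.1 hi with ⟨ha, hb⟩ | ⟨hb, ha⟩
    · exact hadj i a ha b hb
    · exact (hadj i b hb a ha).symm

theorem adjMatrix_eq (R : Type*) [NonAssocSemiring R] (hdec : IsBipDecomp G A B) :
    G.adjMatrix R = (membershipMatrix R A)ᵀ * membershipMatrix R B
      + (membershipMatrix R B)ᵀ * membershipMatrix R A := by
  ext a b
  have hterm : ∀ i, ((if a ∈ A i then 1 else 0) * (if b ∈ B i then 1 else 0)
      + (if a ∈ B i then 1 else 0) * (if b ∈ A i then 1 else 0) : R)
      = if s(a, b) ∈ (A i ×ˢ B i).image (fun p => s(p.1, p.2)) then 1 else 0 := by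
    intro i
    have := disjoint_left.1 (hdec.1 i)
    simp only [mk_mem_image_product_iff]
    by_cases ha : a ∈ A i <;> by_cases hb : b ∈ A i <;> simp_all
  rw [SimpleGraph.adjMatrix_apply, Matrix.add_apply, mul_apply, mul_apply, ← sum_add_distrib]
  simp only [transpose_apply, membershipMatrix, of_apply]
  rw [sum_congr rfl fun i _ => hterm i, sum_boole, hdec.card_filter_mem]
  split_ifs <;> simp

theorem dotProduct_adjMatrix_mulVec [Fintype V] {R : Type*} [CommRing R]
    (hdec : IsBipDecomp G A B) (x : V → R) :
    x ⬝ᵥ G.adjMatrix R *ᵥ x = 2 * (membershipMatrix R A *ᵥ x ⬝ᵥ membershipMatrix R B *ᵥ x) := by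
  rw [hdec.adjMatrix_eq R, add_mulVec, dotProduct_add, ← mulVec_mulVec, ← mulVec_mulVec,
    dotProduct_mulVec x, dotProduct_mulVec x, vecMul_transpose, vecMul_transpose,
    dotProduct_comm (membershipMatrix R B *ᵥ x)]
  ring

end IsBipDecomp

/-- Graham–Pollak lower bound: any partition of the edge set of `G` into `k`
edge-disjoint complete bipartite subgraphs satisfies `k ≥ max{n₊, n₋}`, where
`n₊` (resp. `n₋`) is the number of positive (resp. negative) eigenvalues of the
adjacency matrix of `G`, counted with multiplicity. -/
theorem stmt0 {V : Type*} [Fintype V] [DecidableEq V] (G : SimpleGraph V) [DecidableRel G.Adj]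
    (hH : (G.adjMatrix ℝ).IsHermitian)
    (k : ℕ) (A B : Fin k → Finset V) (hdec : IsBipDecomp G A B) :
    (Finset.univ.filter fun i => 0 < hH.eigenvalues i).card ≤ k ∧
    (Finset.univ.filter fun i => hH.eigenvalues i < 0).card ≤ k := by
  have hL : ∀ x, (membershipMatrix ℝ A).mulVecLin x = 0 → x ⬝ᵥ G.adjMatrix ℝ *ᵥ x = 0 :=
    fun x hx => by rw [hdec.dotProduct_adjMatrix_mulVec, ← mulVecLin_apply, hx, zero_dotProduct,
      mul_zero]
  have hcard (ε : ℝ) {S : Finset V} (hS : ∀ j ∈ S, 0 < ε * hH.eigenvalues j) : #S ≤ k := by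
    simpa using hH.card_le_finrank_of_dotProduct_mulVec_eq_zero _ hL hS
  exact ⟨hcard 1 (by simp), hcard (-1) (by simp)⟩
end

section
/- The edge set of the complete graph K_n cannot be partitioned into fewer than n−1 edge-disjoint complete bipartite subgraphs, and such a partition into exactly n−1 complete bipartite subgraphs exists; hence τ(K_n) = n−1. -/
open Finset

lemma keyA {n k : ℕ} (A B : Fin k → Finset (Fin n))
    (hd : IsBipDecomp (⊤ : SimpleGraph (Fin n)) A B) (x : Fin n → ℝ) :
    ∑ p ∈ (univ ×ˢ univ).filter (fun p : Fin n × Fin n => p.1 < p.2), x p.1 * x p.2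
      = ∑ i, (∑ a ∈ A i, x a) * (∑ b ∈ B i, x b) := by
  obtain ⟨hdisj, _, hcov⟩ := hd
  have hne : ∀ i, ∀ a ∈ A i, ∀ b ∈ B i, a ≠ b := by
    intro i a ha b hb h
    exact Finset.disjoint_left.mp (hdisj i) ha (h ▸ hb)
  have h1 : (∑ i, (∑ a ∈ A i, x a) * (∑ b ∈ B i, x b))
      = ∑ q ∈ (univ : Finset (Fin k)).sigma (fun i => A i ×ˢ B i), x q.2.1 * x q.2.2 := by
    rw [Finset.sum_sigma]
    congr 1
    ext i
    rw [Finset.sum_mul_sum, Finset.sum_product]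
  rw [h1]
  symm
  apply Finset.sum_bij (i := fun (q : Σ _ : Fin k, Fin n × Fin n) _ =>
    if q.2.1 < q.2.2 then q.2 else (q.2.2, q.2.1))
  · rintro ⟨i, a, b⟩ hq
    simp only [Finset.mem_sigma, Finset.mem_product] at hq
    have hab := hne i a hq.2.1 b hq.2.2
    simp only [Finset.mem_filter, Finset.mem_product, Finset.mem_univ, true_and]
    split_ifs with h
    · exact h
    · exact lt_of_le_of_ne (not_lt.mp h) (Ne.symm hab)
  · rintro ⟨i, a, b⟩ hq ⟨j, c, d⟩ hr heq
    simp only [Finset.mem_sigma, Finset.mem_product, Finset.mem_univ, true_and] at hq hr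
    -- the unordered pairs are equal
    have hs : s(a, b) = s(c, d) := by
      have : ∀ (p : Fin n × Fin n), s((if p.1 < p.2 then p else (p.2, p.1)).1,
          (if p.1 < p.2 then p else (p.2, p.1)).2) = s(p.1, p.2) := by
        intro p; split_ifs <;> simp [Sym2.eq_swap]
      calc s(a,b) = s((if a < b then (a,b) else (b,a)).1, (if a < b then (a,b) else (b,a)).2) :=
            (this (a,b)).symm
        _ = s((if c < d then (c,d) else (d,c)).1, (if c < d then (c,d) else (d,c)).2) := by
            rw [heq]
        _ = s(c,d) := this (c,d)
    have hemem : s(a,b) ∈ (⊤ : SimpleGraph (Fin n)).edgeSet := by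
      rw [SimpleGraph.mem_edgeSet]
      exact hne i a hq.1 b hq.2
    obtain ⟨u, _, huniq⟩ := hcov _ hemem
    have hi : i = u := huniq i (Finset.mem_image.mpr ⟨(a,b), Finset.mem_product.mpr hq, rfl⟩)
    have hj : j = u := huniq j (Finset.mem_image.mpr ⟨(c,d), Finset.mem_product.mpr hr, hs.symm⟩)
    subst hi
    have hij : i = j := hj.symm
    subst hij
    rcases Sym2.eq_iff.mp hs with ⟨h1, h2⟩ | ⟨h1, h2⟩
    · simp [h1, h2]
    · exact absurd (h1 ▸ hr.2 : a ∈ B i) (Finset.disjoint_left.mp (hdisj i) hq.1)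
  · rintro ⟨a, b⟩ hp
    simp only [Finset.mem_filter, Finset.mem_product, Finset.mem_univ, true_and] at hp
    have hemem : s(a,b) ∈ (⊤ : SimpleGraph (Fin n)).edgeSet := by
      rw [SimpleGraph.mem_edgeSet]; exact hp.ne
    obtain ⟨u, hu, _⟩ := hcov _ hemem
    obtain ⟨⟨c, d⟩, hcd, hs⟩ := Finset.mem_image.mp hu
    rw [Finset.mem_product] at hcd
    refine ⟨⟨u, c, d⟩, by simp [Finset.mem_sigma, Finset.mem_product, hcd], ?_⟩
    rcases Sym2.eq_iff.mp hs with ⟨h1, h2⟩ | ⟨h1, h2⟩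
    · subst h1; subst h2; simp [hp]
    · subst h1; subst h2
      have : ¬ c < d := not_lt.mpr hp.le
      simp [this]
  · rintro ⟨i, a, b⟩ hq
    dsimp only
    split_ifs <;> ring


lemma keyB {n : ℕ} (x : Fin n → ℝ) :
    (∑ v, x v)^2 = (∑ v, x v^2)
      + 2 * ∑ p ∈ (univ ×ˢ univ).filter (fun p : Fin n × Fin n => p.1 < p.2), x p.1 * x p.2 := by
  set S := ∑ p ∈ (univ ×ˢ univ).filter (fun p : Fin n × Fin n => p.1 < p.2), x p.1 * x p.2 with hS
  have h0 : (∑ v, x v)^2 = ∑ p ∈ (univ ×ˢ univ : Finset (Fin n × Fin n)), x p.1 * x p.2 := by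
    rw [sq, Finset.sum_mul_sum, Finset.sum_product]
  have hsplit : (univ ×ˢ univ : Finset (Fin n × Fin n)) =
      (univ : Finset (Fin n)).diag ∪ (univ : Finset (Fin n)).offDiag :=
    (Finset.diag_union_offDiag _).symm
  have hdisj : Disjoint (univ : Finset (Fin n)).diag (univ : Finset (Fin n)).offDiag :=
    Finset.disjoint_diag_offDiag _
  have hdiag : ∑ p ∈ (univ : Finset (Fin n)).diag, x p.1 * x p.2 = ∑ v, x v^2 := by
    rw [Finset.sum_diag]
    exact Finset.sum_congr rfl fun v _ => (sq (x v)).symm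
  have hoff : (univ : Finset (Fin n)).offDiag
      = (univ ×ˢ univ).filter (fun p : Fin n × Fin n => p.1 < p.2)
        ∪ (univ ×ˢ univ).filter (fun p : Fin n × Fin n => p.2 < p.1) := by
    ext ⟨a, b⟩
    simp only [Finset.mem_offDiag, Finset.mem_union, Finset.mem_filter, Finset.mem_product,
      Finset.mem_univ, true_and]
    constructor
    · intro h; exact lt_or_gt_of_ne h
    · intro h; rcases h with h | h; exacts [h.ne, h.ne']
  have hdisj2 : Disjoint ((univ ×ˢ univ).filter (fun p : Fin n × Fin n => p.1 < p.2))
      ((univ ×ˢ univ).filter (fun p : Fin n × Fin n => p.2 < p.1)) := by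
    rw [Finset.disjoint_left]
    intro p hp hq
    simp only [Finset.mem_filter] at hp hq
    exact absurd hq.2 (asymm hp.2)
  have hswap : ∑ p ∈ (univ ×ˢ univ).filter (fun p : Fin n × Fin n => p.2 < p.1), x p.1 * x p.2
      = ∑ p ∈ (univ ×ˢ univ).filter (fun p : Fin n × Fin n => p.1 < p.2), x p.1 * x p.2 := by
    apply Finset.sum_nbij' (i := fun p => (p.2, p.1)) (j := fun p => (p.2, p.1)) <;>
      simp [mul_comm]
  rw [h0, hsplit, Finset.sum_union hdisj, hdiag, hoff, Finset.sum_union hdisj2, hswap, ← hS]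
  ring

lemma lowerBound {n k : ℕ} (A B : Fin k → Finset (Fin n))
    (hd : IsBipDecomp (⊤ : SimpleGraph (Fin n)) A B) : n - 1 ≤ k := by
  by_contra hcon
  push_neg at hcon
  have hkn : k + 1 < n := by omega
  set φ : (Fin n → ℝ) →ₗ[ℝ] (Option (Fin k) → ℝ) :=
    LinearMap.pi (fun o => Option.elim o (∑ v, LinearMap.proj v)
      (fun i => ∑ a ∈ A i, LinearMap.proj a)) with hφ
  have hni : ¬ Function.Injective φ := by
    intro hi
    have := LinearMap.finrank_le_finrank_of_injective hi
    simp only [Module.finrank_pi, Fintype.card_fin, Fintype.card_option] at this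
    omega
  rw [Function.not_injective_iff] at hni
  obtain ⟨y, z, hyz, hne⟩ := hni
  set x : Fin n → ℝ := y - z with hx
  have hx0 : x ≠ 0 := sub_ne_zero_of_ne hne
  have hφx : φ x = 0 := by rw [hx, map_sub, hyz, sub_self]
  have hsum : ∑ v, x v = 0 := by
    have := congrFun hφx none
    simpa [hφ, LinearMap.pi_apply, LinearMap.sum_apply, LinearMap.proj_apply] using this
  have hA : ∀ i, ∑ a ∈ A i, x a = 0 := by
    intro i
    have := congrFun hφx (some i)
    simpa [hφ, LinearMap.pi_apply, LinearMap.sum_apply, LinearMap.proj_apply] using this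
  have hsq : ∑ v, x v ^ 2 = 0 := by
    have hb := keyB x
    rw [hsum, keyA A B hd x] at hb
    simp only [hA, zero_mul, Finset.sum_const_zero, mul_zero, add_zero] at hb
    linarith [hb]
  have : x = 0 := by
    funext v
    have h := (Finset.sum_eq_zero_iff_of_nonneg (fun v _ => sq_nonneg (x v))).mp hsq v (mem_univ v)
    exact pow_eq_zero_iff (two_ne_zero) |>.mp h
  exact hx0 this

lemma construction (n : ℕ) (hn : 1 ≤ n) :
    ∃ A B : Fin (n - 1) → Finset (Fin n),
      IsBipDecomp (⊤ : SimpleGraph (Fin n)) A B := by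
  refine ⟨fun i => {⟨i.val, by omega⟩},
    fun i => univ.filter (fun j => i.val < j.val), ?_, ?_, ?_⟩
  · intro i
    simp only [Finset.disjoint_singleton_left, Finset.mem_filter, Finset.mem_univ, true_and]
    exact lt_irrefl _
  · intro i a ha b hb
    simp only [Finset.mem_singleton] at ha
    simp only [Finset.mem_filter, Finset.mem_univ, true_and] at hb
    rw [SimpleGraph.top_adj]
    subst ha
    exact fun h => absurd (congrArg Fin.val h) (by simp; omega)
  · intro e he
    induction e with
    | h a b =>
      rw [SimpleGraph.mem_edgeSet, SimpleGraph.top_adj] at he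
      -- wlog a < b
      have key : ∀ c d : Fin n, c.val < d.val →
          ∃! i : Fin (n-1), s(c, d) ∈ ((fun i => ({⟨i.val, by omega⟩} : Finset (Fin n))) i ×ˢ
            (fun i => univ.filter (fun j => i.val < j.val)) i).image fun p => s(p.1, p.2) := by
        intro c d hcd
        refine ⟨⟨c.val, by omega⟩, ?_, ?_⟩
        · refine Finset.mem_image.mpr ⟨(c, d), ?_, rfl⟩
          rw [Finset.mem_product]
          constructor
          · simp [Fin.ext_iff]
          · simp only [Finset.mem_filter, Finset.mem_univ, true_and]; exact hcd
        · intro j hj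
          obtain ⟨⟨u, v⟩, huv, hs⟩ := Finset.mem_image.mp hj
          rw [Finset.mem_product] at huv
          simp only [Finset.mem_singleton, Finset.mem_filter, Finset.mem_univ, true_and] at huv
          obtain ⟨hu, hv⟩ := huv
          have h3 : u.val = j.val := by rw [hu]
          apply Fin.ext
          rcases Sym2.eq_iff.mp hs with ⟨h1, h2⟩ | ⟨h1, h2⟩
          · have h4 := congrArg Fin.val h1
            simp only at h4 ⊢
            omega
          · have h4 := congrArg Fin.val h1
            have h5 := congrArg Fin.val h2
            simp only at h4 h5 ⊢
            omega
      rcases lt_or_gt_of_ne he with h | h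
      · exact key a b h
      · have := key b a h
        rwa [Sym2.eq_swap] at this

/-- Graham–Pollak: every partition of `E(K_n)` into edge-disjoint complete bipartite
subgraphs has at least `n - 1` parts, and a partition with exactly `n - 1` parts
exists; hence `τ(K_n) = n - 1`. -/
theorem stmt1 (n : ℕ) (hn : 1 ≤ n) :
    (∀ (k : ℕ) (A B : Fin k → Finset (Fin n)),
        IsBipDecomp (⊤ : SimpleGraph (Fin n)) A B → n - 1 ≤ k) ∧
    ∃ A B : Fin (n - 1) → Finset (Fin n),
      IsBipDecomp (⊤ : SimpleGraph (Fin n)) A B :=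
  ⟨fun _ A B hd => lowerBound A B hd, construction n hn⟩
end

section
/- If a graph G has no cycle of length 4 (i.e., G is C₄-free), then τ(G) = n − α(G), where n is the number of vertices and α(G) is the independence number. -/
open Finset

/-- The independence number `α(G)`: the largest cardinality of a vertex subset
spanning no edge of `G`. -/
noncomputable def indepNum {V : Type*} [Fintype V] (G : SimpleGraph V) : ℕ :=
  sSup {m | ∃ I : Finset V, I.card = m ∧ ∀ u ∈ I, ∀ v ∈ I, ¬ G.Adj u v}

/-!
A complete bipartite subgraph `A × B` with `|A|, |B| ≥ 2` contains a 4-cycle, so in a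
C₄-free graph every part of a bipartite decomposition has a side with at most one vertex. The union
of these sides meets every edge, so its complement is independent and the number of parts is at
least `n - α(G)`. Conversely, for any graph, enumerate a vertex cover `c₀, …, c_{m-1}` with
`m = n - α(G)` (the complement of a maximum independent set) and let the `i`-th star be centred at
`cᵢ` with all neighbours not among `c₀, …, c_{i-1}`: each edge lies in the star of its endpoint of
least index, and in no other.
-/

def IsVertexCover {V : Type*} (G : SimpleGraph V) (C : Finset V) : Prop :=
  ∀ ⦃u v⦄, G.Adj u v → u ∈ C ∨ v ∈ C

def HasFourCycle {V : Type*} (G : SimpleGraph V) : Prop :=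
  ∃ a b c d : V, a ≠ b ∧ a ≠ c ∧ a ≠ d ∧ b ≠ c ∧ b ≠ d ∧ c ≠ d ∧
    G.Adj a b ∧ G.Adj b c ∧ G.Adj c d ∧ G.Adj d a

section IndepNum

variable {V : Type*} [Fintype V] (G : SimpleGraph V)

lemma bddAbove_indepSet_card :
    BddAbove {m | ∃ I : Finset V, I.card = m ∧ ∀ u ∈ I, ∀ v ∈ I, ¬ G.Adj u v} :=
  ⟨Fintype.card V, by rintro m ⟨I, rfl, -⟩; exact card_le_univ I⟩

lemma exists_indepSet_card_eq_indepNum :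
    ∃ I : Finset V, I.card = indepNum G ∧ ∀ u ∈ I, ∀ v ∈ I, ¬ G.Adj u v :=
  Nat.sSup_mem ⟨0, by simp⟩ (bddAbove_indepSet_card G)

lemma card_le_indepNum {I : Finset V} (hI : ∀ u ∈ I, ∀ v ∈ I, ¬ G.Adj u v) :
    I.card ≤ indepNum G :=
  le_csSup (bddAbove_indepSet_card G) ⟨I, rfl, hI⟩

variable [DecidableEq V] {G}

lemma IsVertexCover.card_sub_indepNum_le {C : Finset V} (hC : IsVertexCover G C) :
    Fintype.card V - indepNum G ≤ C.card := by
  have hI : ∀ u ∈ univ \ C, ∀ v ∈ univ \ C, ¬ G.Adj u v := by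
    intro u hu v hv huv
    simp only [mem_sdiff, mem_univ, true_and] at hu hv
    exact (hC huv).elim hu hv
  have := card_le_indepNum G hI
  rw [card_univ_sdiff] at this
  omega

variable (G) in
lemma exists_isVertexCover_card_eq :
    ∃ C : Finset V, IsVertexCover G C ∧ C.card = Fintype.card V - indepNum G := by
  obtain ⟨I, hIcard, hI⟩ := exists_indepSet_card_eq_indepNum G
  refine ⟨univ \ I, fun u v huv => ?_, by rw [card_univ_sdiff, hIcard]⟩
  by_contra! h
  simp only [mem_sdiff, mem_univ, true_and, not_not] at h
  exact hI u h.1 v h.2 huv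

end IndepNum

section FourCycleFree

variable {V : Type*} {G : SimpleGraph V}

lemma min_card_le_one_of_forall_adj (hG : ¬ HasFourCycle G) {A B : Finset V}
    (hAB : Disjoint A B) (hadj : ∀ a ∈ A, ∀ b ∈ B, G.Adj a b) : min A.card B.card ≤ 1 := by
  by_contra! h
  obtain ⟨a, ha, a', ha', haa'⟩ := one_lt_card.mp (lt_min_iff.mp h).1
  obtain ⟨b, hb, b', hb', hbb'⟩ := one_lt_card.mp (lt_min_iff.mp h).2
  have hne : ∀ x ∈ A, ∀ y ∈ B, x ≠ y := fun x hx y hy => disjoint_iff_ne.mp hAB x hx y hy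
  exact hG ⟨a, b, a', b', hne a ha b hb, haa', hne a ha b' hb', (hne a' ha' b hb).symm, hbb',
    hne a' ha' b' hb', hadj a ha b hb, (hadj a' ha' b hb).symm, hadj a' ha' b' hb',
    (hadj a ha b' hb').symm⟩

end FourCycleFree

section LowerBound

variable {V : Type*} [DecidableEq V] {G : SimpleGraph V} {k : ℕ} {A B : Fin k → Finset V}

lemma IsBipDecomp.exists_mem_of_adj (h : IsBipDecomp G A B) {u v : V} (huv : G.Adj u v) :
    ∃ i, u ∈ A i ∧ v ∈ B i ∨ u ∈ B i ∧ v ∈ A i := by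
  obtain ⟨i, hi, -⟩ := h.2.2 s(u, v) huv
  obtain ⟨⟨a, b⟩, hab, heq⟩ := mem_image.mp hi
  rw [mem_product] at hab
  rcases Sym2.eq_iff.mp heq with ⟨rfl, rfl⟩ | ⟨rfl, rfl⟩
  · exact ⟨i, .inl hab⟩
  · exact ⟨i, .inr hab.symm⟩

def smallerSides (A B : Fin k → Finset V) : Finset V :=
  univ.biUnion fun i => if (A i).card ≤ (B i).card then A i else B i

lemma card_smallerSides_le : (smallerSides A B).card ≤ ∑ i, min (A i).card (B i).card :=
  card_biUnion_le.trans <| sum_le_sum fun i _ => by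
    split_ifs with h <;> simp [min_def, h]

lemma mem_smallerSides_or {i : Fin k} {x y : V} (hx : x ∈ A i) (hy : y ∈ B i) :
    x ∈ smallerSides A B ∨ y ∈ smallerSides A B := by
  simp only [smallerSides, mem_biUnion, mem_univ, true_and]
  by_cases hi : (A i).card ≤ (B i).card
  · exact .inl ⟨i, by rwa [if_pos hi]⟩
  · exact .inr ⟨i, by rwa [if_neg hi]⟩

lemma IsBipDecomp.isVertexCover_smallerSides (h : IsBipDecomp G A B) :
    IsVertexCover G (smallerSides A B) := by
  intro u v huv
  obtain ⟨i, ⟨hu, hv⟩ | ⟨hu, hv⟩⟩ := h.exists_mem_of_adj huv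
  · exact mem_smallerSides_or hu hv
  · exact (mem_smallerSides_or hv hu).symm

lemma IsBipDecomp.card_sub_indepNum_le_sum_min [Fintype V] (h : IsBipDecomp G A B) :
    Fintype.card V - indepNum G ≤ ∑ i, min (A i).card (B i).card :=
  h.isVertexCover_smallerSides.card_sub_indepNum_le.trans card_smallerSides_le

lemma IsBipDecomp.card_sub_indepNum_le [Fintype V] (hG : ¬ HasFourCycle G)
    (h : IsBipDecomp G A B) : Fintype.card V - indepNum G ≤ k := by
  calc Fintype.card V - indepNum G ≤ ∑ i, min (A i).card (B i).card :=
        h.card_sub_indepNum_le_sum_min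
    _ ≤ ∑ _i : Fin k, 1 := sum_le_sum fun i _ => min_card_le_one_of_forall_adj hG (h.1 i) (h.2.1 i)
    _ = k := by simp

end LowerBound

lemma existsUnique_minimal_of_exists {α : Type*} [LinearOrder α] [WellFoundedLT α] {P : α → Prop}
    (h : ∃ i, P i) : ∃! i, P i ∧ ∀ j < i, ¬ P j := by
  obtain ⟨i, hi, hmin⟩ := wellFounded_lt.has_min {i | P i} h
  refine ⟨i, ⟨hi, fun j hj hPj => hmin j hPj hj⟩, fun j ⟨hj, hjmin⟩ => ?_⟩
  rcases lt_trichotomy j i with hlt | heq | hgt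
  · exact absurd hlt (hmin j hj)
  · exact heq
  · exact absurd hi (hjmin i hgt)

section Stars

variable {V : Type*} [Fintype V] [DecidableEq V] {G : SimpleGraph V} [DecidableRel G.Adj]
  {m : ℕ} {c : Fin m → V}

variable (G) in
def starLeaves (c : Fin m → V) (i : Fin m) : Finset V :=
  univ.filter fun v => G.Adj (c i) v ∧ ∀ j < i, c j ≠ v

lemma mem_star_iff (hc : Function.Injective c) {u v : V} (huv : G.Adj u v) (i : Fin m) :
    s(u, v) ∈ (({c i} : Finset V) ×ˢ starLeaves G c i).image (fun p => s(p.1, p.2)) ↔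
      (c i = u ∨ c i = v) ∧ ∀ j < i, ¬ (c j = u ∨ c j = v) := by
  simp only [mem_image, mem_product, mem_singleton, starLeaves, mem_filter, mem_univ, true_and,
    Prod.exists]
  constructor
  · rintro ⟨a, b, ⟨rfl, -, hb⟩, heq⟩
    rcases Sym2.eq_iff.mp heq with ⟨rfl, rfl⟩ | ⟨rfl, rfl⟩
    · exact ⟨.inl rfl, fun j hj => not_or.mpr ⟨fun h => hj.ne (hc h), hb j hj⟩⟩
    · exact ⟨.inr rfl, fun j hj => not_or.mpr ⟨hb j hj, fun h => hj.ne (hc h)⟩⟩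
  · rintro ⟨rfl | rfl, hmin⟩
    · exact ⟨c i, v, ⟨rfl, huv, fun j hj => (not_or.mp (hmin j hj)).2⟩, rfl⟩
    · exact ⟨c i, u, ⟨rfl, huv.symm, fun j hj => (not_or.mp (hmin j hj)).1⟩, Sym2.eq_swap⟩

lemma isBipDecomp_stars (hc : Function.Injective c)
    (hcover : ∀ ⦃u v⦄, G.Adj u v → ∃ i, c i = u ∨ c i = v) :
    IsBipDecomp G (fun i => {c i}) (starLeaves G c) := by
  refine ⟨fun i => ?_, fun i a ha b hb => ?_, fun e he => ?_⟩
  · rw [disjoint_singleton_left]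
    exact fun h => G.irrefl (mem_filter.mp h).2.1
  · rw [mem_singleton.mp ha]
    exact (mem_filter.mp hb).2.1
  · induction e using Sym2.ind with
    | _ u v =>
      simp_rw [mem_star_iff hc he]
      exact existsUnique_minimal_of_exists (hcover he)

end Stars

lemma IsVertexCover.exists_isBipDecomp {V : Type*} [Fintype V] [DecidableEq V]
    {G : SimpleGraph V} {C : Finset V} (hC : IsVertexCover G C) :
    ∃ A B : Fin C.card → Finset V, IsBipDecomp G A B := by
  classical
  let c : Fin C.card → V := fun i => C.equivFin.symm i
  refine ⟨_, _, isBipDecomp_stars (c := c) (Subtype.val_injective.comp C.equivFin.symm.injective)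
    fun u v huv => ?_⟩
  rcases hC huv with hu | hv
  · exact ⟨C.equivFin ⟨u, hu⟩, .inl (by simp [c])⟩
  · exact ⟨C.equivFin ⟨v, hv⟩, .inr (by simp [c])⟩

/-- If `G` contains no 4-cycle, then `τ(G) = n - α(G)`: every bipartite
decomposition has at least `n - α(G)` parts, and one with exactly `n - α(G)`
parts exists. -/
theorem stmt4 {V : Type*} [Fintype V] [DecidableEq V] (G : SimpleGraph V)
    (hC4 : ¬ ∃ a b c d : V, a ≠ b ∧ a ≠ c ∧ a ≠ d ∧ b ≠ c ∧ b ≠ d ∧ c ≠ d ∧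
      G.Adj a b ∧ G.Adj b c ∧ G.Adj c d ∧ G.Adj d a) :
    (∀ (k : ℕ) (A B : Fin k → Finset V),
        IsBipDecomp G A B → Fintype.card V - indepNum G ≤ k) ∧
    ∃ A B : Fin (Fintype.card V - indepNum G) → Finset V, IsBipDecomp G A B := by
  refine ⟨fun k A B h => h.card_sub_indepNum_le hC4, ?_⟩
  obtain ⟨C, hC, hcard⟩ := exists_isVertexCover_card_eq G
  rw [← hcard]
  exact hC.exists_isBipDecomp
end

section
/- Suppose the edge set of a graph G on n vertices is partitioned into τ(G) complete bipartite subgraphs, of which exactly s are stars with centers v₁,…,v_s, and the remaining parts K_{A_j,B_j} satisfy A_j, B_j ⊆ V(G) ∖ {v₁,…,v_s}. Then τ(G) = s + τ'(G'), where G' is the subgraph induced on V(G) ∖ {v₁,…,v_s} and τ'(G') is the minimum number of non-star complete bipartite subgraphs partitioning E(G'). -/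
open Finset

/-- The bipartition number `τ(G)`: the minimum number of edge-disjoint complete
bipartite subgraphs partitioning `E(G)`. -/
noncomputable def tau {V : Type*} [Fintype V] [DecidableEq V] (G : SimpleGraph V) : ℕ :=
  sInf {k | ∃ A B : Fin k → Finset V, IsBipDecomp G A B}

/-- The strong bipartition number `τ'(G)`: the minimum number of complete
bipartite subgraphs, none of which is a star (both sides have ≥ 2 vertices),
partitioning `E(G)`; it is `0` when `G` has at most two vertices, and `∞` when
no such partition exists. -/
noncomputable def tau' {V : Type*} [Fintype V] [DecidableEq V] (G : SimpleGraph V) : ℕ∞ :=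
  if Fintype.card V ≤ 2 then 0
  else
    sInf {c : ℕ∞ | ∃ (k : ℕ) (A B : Fin k → Finset V),
      c = k ∧ IsBipDecomp G A B ∧ ∀ i, 2 ≤ (A i).card ∧ 2 ≤ (B i).card}

lemma mem_bip {V : Type*} [DecidableEq V] (A B : Finset V) (e : Sym2 V) :
    e ∈ (A ×ˢ B).image (fun p => s(p.1, p.2)) ↔ ∃ a ∈ A, ∃ b ∈ B, s(a, b) = e := by
  simp only [Finset.mem_image, Finset.mem_product, Prod.exists]
  tauto

/-- If an optimal bipartite decomposition of `G` has exactly `s` star parts, with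
distinct centers `v 0, …, v (s-1)`, and all remaining (non-star) parts avoid the
star centers, then `τ(G) = s + τ'(G')` where `G'` is the subgraph induced on the
complement of the set of centers. -/
theorem stmt8 {V : Type*} [Fintype V] [DecidableEq V] (G : SimpleGraph V)
    (k s : ℕ) (hks : s ≤ k) (hk : k = tau G)
    (A B : Fin k → Finset V) (hdec : IsBipDecomp G A B)
    (v : Fin s → V) (hv : Function.Injective v)
    (hstars : ∀ i : Fin k, (hi : (i : ℕ) < s) → A i = {v ⟨i, hi⟩})
    (hnonstar : ∀ i : Fin k, s ≤ (i : ℕ) →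
      2 ≤ (A i).card ∧ 2 ≤ (B i).card ∧
      (∀ x ∈ A i, x ∉ Finset.univ.image v) ∧ (∀ x ∈ B i, x ∉ Finset.univ.image v)) :
    (tau G : ℕ∞) = (s : ℕ∞) +
      tau' (G.induce {x : V | x ∉ Finset.univ.image v}) := by
  classical
  set Vs : Set V := {x : V | x ∉ Finset.univ.image v} with hVs
  -- index embedding
  have hIlt : ∀ j : Fin (k - s), s + (j : ℕ) < k := fun j => by omega
  set I : Fin (k - s) → Fin k := fun j => ⟨s + j, hIlt j⟩ with hI
  -- the restricted decomposition of G' := G.induce Vs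
  set A' : Fin (k - s) → Finset ↥Vs :=
    fun j => (A (I j)).preimage Subtype.val Subtype.val_injective.injOn with hA'
  set B' : Fin (k - s) → Finset ↥Vs :=
    fun j => (B (I j)).preimage Subtype.val Subtype.val_injective.injOn with hB'
  have hmemA' : ∀ j (x : ↥Vs), x ∈ A' j ↔ (x : V) ∈ A (I j) := by
    intro j x; simp [hA', Finset.mem_preimage]
  have hmemB' : ∀ j (x : ↥Vs), x ∈ B' j ↔ (x : V) ∈ B (I j) := by
    intro j x; simp [hB', Finset.mem_preimage]
  have hcenter : ∀ c : Fin s, v c ∈ Finset.univ.image v :=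
    fun c => Finset.mem_image_of_mem v (Finset.mem_univ c)
  -- decomposition property for G'
  have hdec' : IsBipDecomp (G.induce Vs) A' B' := by
    refine ⟨?_, ?_, ?_⟩
    · intro j
      rw [Finset.disjoint_left]
      intro x hx hx'
      exact (Finset.disjoint_left.mp (hdec.1 (I j))) ((hmemA' j x).mp hx)
        ((hmemB' j x).mp hx')
    · intro j a ha b hb
      have : G.Adj (a : V) (b : V) :=
        hdec.2.1 (I j) _ ((hmemA' j a).mp ha) _ ((hmemB' j b).mp hb)
      simpa using this
    · intro e he
      revert he
      refine Sym2.inductionOn e fun a b he => ?_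
      have hab : G.Adj (a : V) (b : V) := by simpa using he
      obtain ⟨i, hi, huniq⟩ := hdec.2.2 s((a : V), (b : V)) (by simpa using hab)
      have hsi : s ≤ (i : ℕ) := by
        by_contra h
        push_neg at h
        obtain ⟨a', ha', b', hb', heq⟩ := (mem_bip _ _ _).mp hi
        rw [hstars i h, Finset.mem_singleton] at ha'
        subst ha'
        rcases Sym2.eq_iff.mp heq with ⟨h1, _⟩ | ⟨h1, _⟩
        · exact a.2 (h1 ▸ hcenter _)
        · exact b.2 (h1 ▸ hcenter _)
      have hjlt : (i : ℕ) - s < k - s := by omega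
      refine ⟨⟨(i : ℕ) - s, hjlt⟩, ?_, ?_⟩
      · have hIj : I ⟨(i : ℕ) - s, hjlt⟩ = i := by
          simp only [hI]; exact Fin.ext (by simp; omega)
        obtain ⟨a', ha', b', hb', heq⟩ := (mem_bip _ _ _).mp hi
        rcases Sym2.eq_iff.mp heq with ⟨h1, h2⟩ | ⟨h1, h2⟩
        · subst h1; subst h2
          exact (mem_bip _ _ _).mpr ⟨a, (hmemA' _ a).mpr (by rw [hIj]; exact ha'), b,
            (hmemB' _ b).mpr (by rw [hIj]; exact hb'), rfl⟩
        · subst h1; subst h2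
          exact (mem_bip _ _ _).mpr ⟨b, (hmemA' _ b).mpr (by rw [hIj]; exact ha'), a,
            (hmemB' _ a).mpr (by rw [hIj]; exact hb'), Sym2.eq_swap⟩
      · intro j' hj'
        obtain ⟨a0, ha0, b0, hb0, heq0⟩ := (mem_bip _ _ _).mp hj'
        have heq1 : s((a0 : V), (b0 : V)) = s((a : V), (b : V)) := by
          have := congrArg (Sym2.map (Subtype.val : ↥Vs → V)) heq0
          simpa using this
        have : I j' = i := huniq (I j') ((mem_bip _ _ _).mpr
          ⟨(a0 : V), (hmemA' j' a0).mp ha0, (b0 : V), (hmemB' j' b0).mp hb0, heq1⟩)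
        have : s + (j' : ℕ) = (i : ℕ) := by
          have := congrArg (Fin.val) this
          simpa [hI] using this
        exact Fin.ext (by simp; omega)
  -- the parts of the restricted decomposition are non-stars
  have himgA : ∀ j, (A' j).image Subtype.val = A (I j) := by
    intro j
    ext x
    constructor
    · rintro hx
      obtain ⟨y, hy, rfl⟩ := Finset.mem_image.mp hx
      exact (hmemA' j y).mp hy
    · intro hx
      exact Finset.mem_image.mpr ⟨⟨x, (hnonstar (I j) (by simp [hI])).2.2.1 x hx⟩,
        (hmemA' j _).mpr hx, rfl⟩
  have himgB : ∀ j, (B' j).image Subtype.val = B (I j) := by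
    intro j
    ext x
    constructor
    · rintro hx
      obtain ⟨y, hy, rfl⟩ := Finset.mem_image.mp hx
      exact (hmemB' j y).mp hy
    · intro hx
      exact Finset.mem_image.mpr ⟨⟨x, (hnonstar (I j) (by simp [hI])).2.2.2 x hx⟩,
        (hmemB' j _).mpr hx, rfl⟩
  have hcardA' : ∀ j, 2 ≤ (A' j).card := by
    intro j
    have h1 : (A' j).card = (A (I j)).card := by
      rw [← himgA j, Finset.card_image_of_injective _ Subtype.val_injective]
    rw [h1]
    exact (hnonstar (I j) (by simp [hI])).1
  have hcardB' : ∀ j, 2 ≤ (B' j).card := by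
    intro j
    have h1 : (B' j).card = (B (I j)).card := by
      rw [← himgB j, Finset.card_image_of_injective _ Subtype.val_injective]
    rw [h1]
    exact (hnonstar (I j) (by simp [hI])).2.1
  -- lower bound: every non-star decomposition of G' has at least k - s parts
  have hlow : ∀ (m : ℕ) (A2 B2 : Fin m → Finset ↥Vs),
      IsBipDecomp (G.induce Vs) A2 B2 → k ≤ s + m := by
    intro m A2 B2 hdec2
    -- build a decomposition of G with s + m parts
    set C : Fin (s + m) → Finset V := fun i =>
      if h : (i : ℕ) < s then A ⟨i, lt_of_lt_of_le h hks⟩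
      else (A2 ⟨(i : ℕ) - s, by omega⟩).image Subtype.val with hC
    set D : Fin (s + m) → Finset V := fun i =>
      if h : (i : ℕ) < s then B ⟨i, lt_of_lt_of_le h hks⟩
      else (B2 ⟨(i : ℕ) - s, by omega⟩).image Subtype.val with hD
    have hCpos : ∀ (i : Fin (s + m)) (h : (i : ℕ) < s),
        C i = A ⟨i, lt_of_lt_of_le h hks⟩ := fun i h => dif_pos h
    have hCneg : ∀ (i : Fin (s + m)) (h : ¬ (i : ℕ) < s),
        C i = (A2 ⟨(i : ℕ) - s, by omega⟩).image Subtype.val := fun i h => dif_neg h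
    have hDpos : ∀ (i : Fin (s + m)) (h : (i : ℕ) < s),
        D i = B ⟨i, lt_of_lt_of_le h hks⟩ := fun i h => dif_pos h
    have hDneg : ∀ (i : Fin (s + m)) (h : ¬ (i : ℕ) < s),
        D i = (B2 ⟨(i : ℕ) - s, by omega⟩).image Subtype.val := fun i h => dif_neg h
    have hCD : IsBipDecomp G C D := by
      refine ⟨?_, ?_, ?_⟩
      · intro i
        by_cases h : (i : ℕ) < s
        · simp only [hC, hD, dif_pos h]
          exact hdec.1 _
        · simp only [hC, hD, dif_neg h]
          rw [Finset.disjoint_left]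
          rintro x hx hx'
          obtain ⟨y, hy, rfl⟩ := Finset.mem_image.mp hx
          obtain ⟨z, hz, hzy⟩ := Finset.mem_image.mp hx'
          have : z = y := Subtype.ext hzy
          subst this
          exact (Finset.disjoint_left.mp (hdec2.1 _)) hy hz
      · intro i a ha b hb
        by_cases h : (i : ℕ) < s
        · simp only [hC, hD, dif_pos h] at ha hb
          exact hdec.2.1 _ _ ha _ hb
        · simp only [hC, hD, dif_neg h] at ha hb
          obtain ⟨y, hy, rfl⟩ := Finset.mem_image.mp ha
          obtain ⟨z, hz, rfl⟩ := Finset.mem_image.mp hb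
          have := hdec2.2.1 _ _ hy _ hz
          simpa using this
      · intro e he
        revert he
        refine Sym2.inductionOn e fun a b he => ?_
        have hab : G.Adj a b := by simpa using he
        obtain ⟨i0, hi0, huniq0⟩ := hdec.2.2 s(a, b) he
        by_cases h0 : (i0 : ℕ) < s
        · -- star part covers the edge
          obtain ⟨a', ha', b', hb', heq⟩ := (mem_bip _ _ _).mp hi0
          rw [hstars i0 h0, Finset.mem_singleton] at ha'
          subst ha'
          have hcent : v ⟨i0, h0⟩ = a ∨ v ⟨i0, h0⟩ = b := by
            rcases Sym2.eq_iff.mp heq with ⟨h1, _⟩ | ⟨h1, _⟩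
            · exact Or.inl h1
            · exact Or.inr h1
          refine ⟨⟨(i0 : ℕ), by omega⟩, ?_, ?_⟩
          · show s(a, b) ∈ ((C ⟨(i0 : ℕ), by omega⟩ ×ˢ D ⟨(i0 : ℕ), by omega⟩).image
              fun p => s(p.1, p.2))
            rw [hCpos _ h0, hDpos _ h0]
            exact hi0
          · intro i' hi'
            replace hi' : s(a, b) ∈ ((C i' ×ˢ D i').image fun p => s(p.1, p.2)) := hi'
            by_cases h' : (i' : ℕ) < s
            · rw [hCpos _ h', hDpos _ h'] at hi'
              have := huniq0 _ hi'
              have hval : (i' : ℕ) = (i0 : ℕ) := congrArg Fin.val this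
              exact Fin.ext (by simpa using hval)
            · exfalso
              rw [hCneg _ h', hDneg _ h'] at hi'
              obtain ⟨a1, ha1, b1, hb1, heq1⟩ := (mem_bip _ _ _).mp hi'
              obtain ⟨y1, _, rfl⟩ := Finset.mem_image.mp ha1
              obtain ⟨z1, _, rfl⟩ := Finset.mem_image.mp hb1
              rcases Sym2.eq_iff.mp heq1 with ⟨h1, h2⟩ | ⟨h1, h2⟩ <;>
                rcases hcent with hc | hc
              · exact y1.2 (by rw [h1, ← hc]; exact hcenter _)
              · exact z1.2 (by rw [h2, ← hc]; exact hcenter _)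
              · exact z1.2 (by rw [h2, ← hc]; exact hcenter _)
              · exact y1.2 (by rw [h1, ← hc]; exact hcenter _)
        · -- non-star part covers the edge: both endpoints avoid the centers
          obtain ⟨a', ha', b', hb', heq⟩ := (mem_bip _ _ _).mp hi0
          have hns := hnonstar i0 (by omega)
          have hamem : a ∉ Finset.univ.image v ∧ b ∉ Finset.univ.image v := by
            rcases Sym2.eq_iff.mp heq with ⟨h1, h2⟩ | ⟨h1, h2⟩
            · exact ⟨h1 ▸ hns.2.2.1 a' ha', h2 ▸ hns.2.2.2 b' hb'⟩
            · exact ⟨h2 ▸ hns.2.2.2 b' hb', h1 ▸ hns.2.2.1 a' ha'⟩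
          set a0 : ↥Vs := ⟨a, hamem.1⟩ with ha0def
          set b0 : ↥Vs := ⟨b, hamem.2⟩ with hb0def
          have he' : s(a0, b0) ∈ (G.induce Vs).edgeSet := by simpa using hab
          obtain ⟨j, hj, huniqj⟩ := hdec2.2.2 s(a0, b0) he'
          refine ⟨⟨s + (j : ℕ), by omega⟩, ?_, ?_⟩
          · show s(a, b) ∈ ((C ⟨s + (j : ℕ), by omega⟩ ×ˢ D ⟨s + (j : ℕ), by omega⟩).image
              fun p => s(p.1, p.2))
            have hne : ¬ ((⟨s + (j : ℕ), by omega⟩ : Fin (s + m)) : ℕ) < s := by simp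
            rw [hCneg _ hne, hDneg _ hne]
            have hjj : (⟨(((⟨s + (j : ℕ), by omega⟩ : Fin (s + m)) : ℕ)) - s, by omega⟩ :
                Fin m) = j := Fin.ext (by simp)
            rw [hjj]
            obtain ⟨a2, ha2, b2, hb2, heq2⟩ := (mem_bip _ _ _).mp hj
            have heq3 : s((a2 : V), (b2 : V)) = s(a, b) := by
              have := congrArg (Sym2.map (Subtype.val : ↥Vs → V)) heq2
              simpa using this
            exact (mem_bip _ _ _).mpr ⟨(a2 : V), Finset.mem_image_of_mem _ ha2,
              (b2 : V), Finset.mem_image_of_mem _ hb2, heq3⟩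
          · intro i' hi'
            replace hi' : s(a, b) ∈ ((C i' ×ˢ D i').image fun p => s(p.1, p.2)) := hi'
            by_cases h' : (i' : ℕ) < s
            · exfalso
              rw [hCpos _ h', hDpos _ h'] at hi'
              obtain ⟨a1, ha1, b1, hb1, heq1⟩ := (mem_bip _ _ _).mp hi'
              rw [hstars _ h', Finset.mem_singleton] at ha1
              subst ha1
              rcases Sym2.eq_iff.mp heq1 with ⟨h1, _⟩ | ⟨h1, _⟩
              · exact hamem.1 (h1 ▸ hcenter _)
              · exact hamem.2 (h1 ▸ hcenter _)
            · rw [hCneg _ h', hDneg _ h'] at hi'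
              obtain ⟨a1, ha1, b1, hb1, heq1⟩ := (mem_bip _ _ _).mp hi'
              obtain ⟨y1, hy1, rfl⟩ := Finset.mem_image.mp ha1
              obtain ⟨z1, hz1, rfl⟩ := Finset.mem_image.mp hb1
              have heq2 : s(y1, z1) = s(a0, b0) := by
                apply Sym2.map.injective (Subtype.val_injective : Function.Injective
                  (Subtype.val : ↥Vs → V))
                simpa using heq1
              have hj' : (⟨(i' : ℕ) - s, by omega⟩ : Fin m) = j :=
                huniqj _ ((mem_bip _ _ _).mpr ⟨y1, hy1, z1, hz1, heq2⟩)
              have hval : (i' : ℕ) - s = (j : ℕ) := congrArg Fin.val hj'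
              exact Fin.ext (by simp; omega)
    have : s + m ∈ {n | ∃ A B : Fin n → Finset V, IsBipDecomp G A B} := ⟨C, D, hCD⟩
    rw [hk]
    exact Nat.sInf_le this
  -- now split on whether the induced vertex set is small
  by_cases hcard : Fintype.card ↥Vs ≤ 2
  · -- τ' = 0 and k = s
    have hks' : k = s := by
      by_contra h
      have hsk : s < k := lt_of_le_of_ne hks (Ne.symm h)
      have hns := hnonstar ⟨s, hsk⟩ (by simp)
      set i : Fin k := ⟨s, hsk⟩
      have hsub : A i ∪ B i ⊆ Vs.toFinset := by
        intro x hx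
        rcases Finset.mem_union.mp hx with hx | hx
        · exact Set.mem_toFinset.mpr (hns.2.2.1 x hx)
        · exact Set.mem_toFinset.mpr (hns.2.2.2 x hx)
      have h4 : 4 ≤ (A i ∪ B i).card := by
        rw [Finset.card_union_of_disjoint (hdec.1 i)]
        omega
      have := Finset.card_le_card hsub
      rw [Set.toFinset_card] at this
      omega
    rw [tau', if_pos hcard, ← hk, hks']
    simp
  · rw [tau', if_neg hcard]
    have hub : sInf {c : ℕ∞ | ∃ (m : ℕ) (A2 B2 : Fin m → Finset ↥Vs),
        c = m ∧ IsBipDecomp (G.induce Vs) A2 B2 ∧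
        ∀ i, 2 ≤ (A2 i).card ∧ 2 ≤ (B2 i).card} ≤ ((k - s : ℕ) : ℕ∞) :=
      sInf_le ⟨k - s, A', B', rfl, hdec', fun j => ⟨hcardA' j, hcardB' j⟩⟩
    have hlb : ((k - s : ℕ) : ℕ∞) ≤ sInf {c : ℕ∞ | ∃ (m : ℕ) (A2 B2 : Fin m → Finset ↥Vs),
        c = m ∧ IsBipDecomp (G.induce Vs) A2 B2 ∧
        ∀ i, 2 ≤ (A2 i).card ∧ 2 ≤ (B2 i).card} := by
      apply le_sInf
      rintro c ⟨m, A2, B2, rfl, hd2, _⟩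
      have h1 : k - s ≤ m := by have := hlow m A2 B2 hd2; omega
      exact_mod_cast h1
    have heq : sInf {c : ℕ∞ | ∃ (m : ℕ) (A2 B2 : Fin m → Finset ↥Vs),
        c = m ∧ IsBipDecomp (G.induce Vs) A2 B2 ∧
        ∀ i, 2 ≤ (A2 i).card ∧ 2 ≤ (B2 i).card} = ((k - s : ℕ) : ℕ∞) :=
      le_antisymm hub hlb
    rw [heq, ← hk, ← Nat.cast_add]
    congr 1
    omega
end

section
/- If the edge set of a graph G can be partitioned into k₁ complete bipartite subgraphs of which k₂ are stars, then there is a partition of E(G) into at most k₁ complete bipartite subgraphs K_{A₁,B₁},…,K_{A_k,B_k} such that the first k₂ parts are stars and for every j > k₂ both sides A_j and B_j are disjoint from the union of the centers A₁,…,A_{k₂} of the stars. -/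
open Finset

/-! Let `c` be the center of a star `i` lying in a non-star part `j`; swapping the sides of `j` if
necessary, `c ∈ A j`. Deleting `c` from `A j` and adding `B j` to the leaves of star `i` moves
exactly the edges `c b`, `b ∈ B j`, from part `j` to part `i`, so it yields a bipartite
decomposition with the same number of parts and the same star centers in which the non-star parts
are strictly smaller. Iterating until no star center meets a non-star part proves the theorem. -/

open Function

lemma existsUnique_mem_of_move {ι α : Type*} [DecidableEq ι] [DecidableEq α]
    {E E' : ι → Finset α} {i j : ι} {S : Finset α} (hS : S ⊆ E j)
    (hi : E' i = E i ∪ S) (hj : E' j = E j \ S) (hl : ∀ l, l ≠ i → l ≠ j → E' l = E l)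
    {x : α} (hx : ∃! l, x ∈ E l) : ∃! l, x ∈ E' l := by
  by_cases hxS : x ∈ S
  · refine ⟨i, by simp [hi, hxS], fun l (hl' : x ∈ E' l) => ?_⟩
    by_contra hli
    by_cases hlj : l = j
    · subst hlj; simp [hj, hxS] at hl'
    · rw [hl l hli hlj] at hl'
      exact hlj (hx.unique hl' (hS hxS))
  · have hiff : ∀ l, x ∈ E' l ↔ x ∈ E l := by
      intro l
      by_cases hli : l = i
      · subst hli; simp [hi, hxS]
      by_cases hlj : l = j
      · subst hlj; simp [hj, hxS]
      rw [hl l hli hlj]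
    simpa only [hiff] using hx

section Edges

variable {V : Type*} [DecidableEq V]

def bipEdges (X Y : Finset V) : Finset (Sym2 V) :=
  (X ×ˢ Y).image fun p => s(p.1, p.2)

lemma mk_mem_bipEdges {X Y : Finset V} {x y : V} :
    s(x, y) ∈ bipEdges X Y ↔ x ∈ X ∧ y ∈ Y ∨ y ∈ X ∧ x ∈ Y := by
  simp only [bipEdges, mem_image, mem_product, Prod.exists, Sym2.eq_iff]
  constructor
  · rintro ⟨a, b, ⟨ha, hb⟩, ⟨rfl, rfl⟩ | ⟨rfl, rfl⟩⟩
    exacts [.inl ⟨ha, hb⟩, .inr ⟨ha, hb⟩]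
  · rintro (⟨hx, hy⟩ | ⟨hy, hx⟩)
    exacts [⟨x, y, ⟨hx, hy⟩, .inl ⟨rfl, rfl⟩⟩, ⟨y, x, ⟨hy, hx⟩, .inr ⟨rfl, rfl⟩⟩]

lemma bipEdges_comm (X Y : Finset V) : bipEdges X Y = bipEdges Y X := by
  ext e
  induction e using Sym2.inductionOn
  simp only [mk_mem_bipEdges]
  tauto

lemma bipEdges_union_right (X Y Z : Finset V) :
    bipEdges X (Y ∪ Z) = bipEdges X Y ∪ bipEdges X Z := by
  simp only [bipEdges, product_union, image_union]

lemma bipEdges_singleton_subset {X : Finset V} {c : V} (hc : c ∈ X) (Y : Finset V) :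
    bipEdges {c} Y ⊆ bipEdges X Y :=
  image_subset_image (product_subset_product_left (singleton_subset_iff.2 hc))

lemma bipEdges_erase_left {X Y : Finset V} {c : V} (hc : c ∉ Y) :
    bipEdges (X.erase c) Y = bipEdges X Y \ bipEdges {c} Y := by
  ext e
  induction e using Sym2.inductionOn with
  | hf x y =>
    simp only [mem_sdiff, mk_mem_bipEdges, mem_erase, mem_singleton]
    constructor
    · rintro (⟨⟨hxc, hx⟩, hy⟩ | ⟨⟨hyc, hy⟩, hx⟩)
      · exact ⟨.inl ⟨hx, hy⟩, by rintro (⟨rfl, -⟩ | ⟨rfl, -⟩) <;> contradiction⟩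
      · exact ⟨.inr ⟨hy, hx⟩, by rintro (⟨rfl, -⟩ | ⟨rfl, -⟩) <;> contradiction⟩
    · rintro ⟨⟨hx, hy⟩ | ⟨hy, hx⟩, hne⟩
      · exact .inl ⟨⟨fun h => hne (.inl ⟨h, hy⟩), hx⟩, hy⟩
      · exact .inr ⟨⟨fun h => hne (.inr ⟨h, hx⟩), hy⟩, hx⟩

end Edges

namespace IsBipDecomp

variable {V : Type*} [DecidableEq V] {G : SimpleGraph V} {k : ℕ} {A B : Fin k → Finset V}

lemma swap (h : IsBipDecomp G A B) (j : Fin k) :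
    IsBipDecomp G (update A j (B j)) (update B j (A j)) := by
  obtain ⟨hdisj, hadj, hcover⟩ := h
  refine ⟨fun l => ?_, fun l => ?_, fun e he => ?_⟩
  · rcases eq_or_ne l j with rfl | hl
    · simpa using (hdisj l).symm
    · simpa [hl] using hdisj l
  · rcases eq_or_ne l j with rfl | hl
    · simpa using fun a ha b hb => (hadj l b hb a ha).symm
    · simpa [hl] using hadj l
  · convert hcover e he using 3 with l
    rcases eq_or_ne l j with rfl | hl
    · simp only [update_self]
      exact bipEdges_comm (B l) (A l)
    · simp [hl]

lemma move_center (h : IsBipDecomp G A B) {i j : Fin k} {c : V} (hij : i ≠ j)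
    (hi : A i = {c}) (hc : c ∈ A j) :
    IsBipDecomp G (update A j ((A j).erase c)) (update B i (B i ∪ B j)) := by
  obtain ⟨hdisj, hadj, hcover⟩ := h
  have hcBi : c ∉ B i := disjoint_left.1 (hdisj i) (hi ▸ mem_singleton_self c)
  have hcBj : c ∉ B j := disjoint_left.1 (hdisj j) hc
  refine ⟨fun l => ?_, fun l => ?_, fun e he => ?_⟩
  · rcases eq_or_ne l i with rfl | hli
    · simp [hij, hi, hcBi, hcBj]
    rcases eq_or_ne l j with rfl | hlj
    · simpa [hli] using (hdisj l).mono_left (erase_subset c (A l))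
    · simpa [hli, hlj] using hdisj l
  · rcases eq_or_ne l i with rfl | hli
    · simp only [update_of_ne hij, hi, update_self, mem_singleton, mem_union]
      rintro a rfl b (hb | hb)
      exacts [hadj l a (by simp [hi]) b hb, hadj j a hc b hb]
    rcases eq_or_ne l j with rfl | hlj
    · simpa [hli] using fun a _ ha => hadj l a ha
    · simpa [hli, hlj] using hadj l
  · refine existsUnique_mem_of_move (i := i) (E := fun l => bipEdges (A l) (B l))
      (E' := fun l => bipEdges (update A j ((A j).erase c) l)
        (update B i (B i ∪ B j) l))
      (bipEdges_singleton_subset hc (B j)) ?_ ?_ (fun l hli hlj => ?_) (hcover e he)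
    · simp [hij, hi, bipEdges_union_right]
    · simp [hij.symm, bipEdges_erase_left hcBj]
    · simp [hli, hlj]

end IsBipDecomp

section Size

variable {V : Type*} {k : ℕ}

def nonStarSize (k₂ : ℕ) (A B : Fin k → Finset V) : ℕ :=
  ∑ j ∈ univ.filter (fun j : Fin k => k₂ ≤ (j : ℕ)), (#(A j) + #(B j))

lemma nonStarSize_swap (k₂ : ℕ) (A B : Fin k → Finset V) (j : Fin k) :
    nonStarSize k₂ (update A j (B j)) (update B j (A j)) =
      nonStarSize k₂ A B := by
  refine sum_congr rfl fun l _ => ?_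
  rcases eq_or_ne l j with rfl | hl
  · simp [add_comm]
  · simp [hl]

lemma nonStarSize_move_center_lt [DecidableEq V] {k₂ : ℕ} {A B : Fin k → Finset V}
    {i j : Fin k} {c : V}
    (hi : (i : ℕ) < k₂) (hj : k₂ ≤ (j : ℕ)) (hc : c ∈ A j) :
    nonStarSize k₂ (update A j ((A j).erase c)) (update B i (B i ∪ B j)) <
      nonStarSize k₂ A B := by
  refine sum_lt_sum (fun l hl => ?_) ⟨j, by simpa using hj, ?_⟩
  · have hli : l ≠ i := by
      rintro rfl
      simp only [mem_filter] at hl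
      omega
    rcases eq_or_ne l j with rfl | hlj
    · simp [hli, card_erase_le]
    · simp [hli, hlj]
  · have hji : j ≠ i := by
      rintro rfl
      omega
    simp [hji, card_erase_lt_of_mem hc]

end Size

namespace IsBipDecomp

variable {V : Type*} [DecidableEq V] {G : SimpleGraph V} {k : ℕ} {A B : Fin k → Finset V}
  {k₂ : ℕ} {i j : Fin k} {c : V}

lemma exists_lt_nonStarSize_of_mem_left (h : IsBipDecomp G A B) (hi : (i : ℕ) < k₂)
    (hj : k₂ ≤ (j : ℕ)) (hAi : A i = {c}) (hc : c ∈ A j) :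
    ∃ A₁ B₁ : Fin k → Finset V, IsBipDecomp G A₁ B₁ ∧ (∀ l : Fin k, (l : ℕ) < k₂ → A₁ l = A l) ∧
      nonStarSize k₂ A₁ B₁ < nonStarSize k₂ A B := by
  have hne : ∀ l : Fin k, (l : ℕ) < k₂ → l ≠ j := by
    rintro l hl rfl
    omega
  exact ⟨_, _, h.move_center (hne i hi) hAi hc, fun l hl => update_of_ne (hne l hl) _ _,
    nonStarSize_move_center_lt hi hj hc⟩

lemma exists_lt_nonStarSize (h : IsBipDecomp G A B)
    (hstar : ∀ l : Fin k, (l : ℕ) < k₂ → #(A l) = 1) (hi : (i : ℕ) < k₂) (hj : k₂ ≤ (j : ℕ))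
    (hci : c ∈ A i) (hcj : c ∈ A j ∨ c ∈ B j) :
    ∃ A₁ B₁ : Fin k → Finset V, IsBipDecomp G A₁ B₁ ∧ (∀ l : Fin k, (l : ℕ) < k₂ → A₁ l = A l) ∧
      nonStarSize k₂ A₁ B₁ < nonStarSize k₂ A B := by
  have hAi : A i = {c} := by
    obtain ⟨c', hc'⟩ := card_eq_one.1 (hstar i hi)
    rw [hc'] at hci ⊢
    rw [mem_singleton.1 hci]
  rcases hcj with hcj | hcj
  · exact h.exists_lt_nonStarSize_of_mem_left hi hj hAi hcj
  have hne : ∀ l : Fin k, (l : ℕ) < k₂ → l ≠ j := by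
    rintro l hl rfl
    omega
  obtain ⟨A₁, B₁, h₁, hA₁, hlt⟩ := (h.swap j).exists_lt_nonStarSize_of_mem_left hi hj
    (by rw [update_of_ne (hne i hi), hAi]) (by rwa [update_self])
  refine ⟨A₁, B₁, h₁, fun l hl => (hA₁ l hl).trans (update_of_ne (hne l hl) _ _), ?_⟩
  rwa [nonStarSize_swap] at hlt

theorem exists_nonStar_disjoint_centers (h : IsBipDecomp G A B)
    (hstar : ∀ i : Fin k, (i : ℕ) < k₂ → #(A i) = 1) :
    ∃ A' B' : Fin k → Finset V, IsBipDecomp G A' B' ∧ (∀ i : Fin k, (i : ℕ) < k₂ → A' i = A i) ∧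
      ∀ j : Fin k, k₂ ≤ (j : ℕ) → ∀ i : Fin k, (i : ℕ) < k₂ →
        Disjoint (A' j) (A i) ∧ Disjoint (B' j) (A i) := by
  induction hn : nonStarSize k₂ A B using Nat.strong_induction_on generalizing A B with
  | _ n ih =>
  by_cases hdone : ∀ j : Fin k, k₂ ≤ (j : ℕ) → ∀ i : Fin k, (i : ℕ) < k₂ →
      Disjoint (A j) (A i) ∧ Disjoint (B j) (A i)
  · exact ⟨A, B, h, fun _ _ => rfl, hdone⟩
  obtain ⟨j, hj, i, hi, c, hci, hcj⟩ : ∃ j : Fin k, k₂ ≤ (j : ℕ) ∧ ∃ i : Fin k, (i : ℕ) < k₂ ∧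
      ∃ c ∈ A i, c ∈ A j ∨ c ∈ B j := by
    simp only [not_forall, not_and_or, not_disjoint_iff] at hdone
    obtain ⟨j, hj, i, hi, ⟨c, hcj, hci⟩ | ⟨c, hcj, hci⟩⟩ := hdone
    exacts [⟨j, hj, i, hi, c, hci, .inl hcj⟩, ⟨j, hj, i, hi, c, hci, .inr hcj⟩]
  obtain ⟨A₁, B₁, h₁, hA₁, hlt⟩ := h.exists_lt_nonStarSize hstar hi hj hci hcj
  obtain ⟨A', B', h', hA', hdisj⟩ :=
    ih _ (hn ▸ hlt) h₁ (fun l hl => hA₁ l hl ▸ hstar l hl) rfl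
  exact ⟨A', B', h', fun l hl => (hA' l hl).trans (hA₁ l hl),
    fun j hj i hi => hA₁ i hi ▸ hdisj j hj i hi⟩

end IsBipDecomp

theorem stmt9_general {V : Type*} [DecidableEq V] (G : SimpleGraph V)
    (k₁ k₂ : ℕ) (hk : k₂ ≤ k₁) (A B : Fin k₁ → Finset V) (hdec : IsBipDecomp G A B)
    (hstar : ∀ i : Fin k₁, (i : ℕ) < k₂ → (A i).card = 1) :
    ∃ (k : ℕ) (_ : k ≤ k₁) (_ : k₂ ≤ k) (A' B' : Fin k → Finset V),
      IsBipDecomp G A' B' ∧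
      (∀ i : Fin k, (i : ℕ) < k₂ → (A' i).card = 1) ∧
      (∀ j : Fin k, k₂ ≤ (j : ℕ) →
        ∀ i : Fin k, (i : ℕ) < k₂ →
          (∀ x ∈ A' j, x ∉ A' i) ∧ (∀ x ∈ B' j, x ∉ A' i)) := by
  obtain ⟨A', B', hdec', hA', hdisj⟩ := hdec.exists_nonStar_disjoint_centers hstar
  refine ⟨k₁, le_rfl, hk, A', B', hdec', fun i hi => hA' i hi ▸ hstar i hi, fun j hj i hi => ?_⟩
  rw [hA' i hi]
  exact ⟨fun _ hx => disjoint_left.1 (hdisj j hj i hi).1 hx,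
    fun _ hx => disjoint_left.1 (hdisj j hj i hi).2 hx⟩

/-- If `E(G)` can be partitioned into `k₁` complete bipartite subgraphs of which
the first `k₂` are stars, then there is a partition into `k ≤ k₁` complete
bipartite subgraphs in which the first `k₂` parts are stars and all later parts
have both sides disjoint from the star centers. -/
theorem stmt9 {V : Type*} [Fintype V] [DecidableEq V] (G : SimpleGraph V)
    (k₁ k₂ : ℕ) (hk : k₂ ≤ k₁) (A B : Fin k₁ → Finset V) (hdec : IsBipDecomp G A B)
    (hstar : ∀ i : Fin k₁, (i : ℕ) < k₂ → (A i).card = 1) :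
    ∃ (k : ℕ) (_ : k ≤ k₁) (_ : k₂ ≤ k) (A' B' : Fin k → Finset V),
      IsBipDecomp G A' B' ∧
      (∀ i : Fin k, (i : ℕ) < k₂ → (A' i).card = 1) ∧
      (∀ j : Fin k, k₂ ≤ (j : ℕ) →
        ∀ i : Fin k, (i : ℕ) < k₂ →
          (∀ x ∈ A' j, x ∉ A' i) ∧ (∀ x ∈ B' j, x ∉ A' i)) :=
  stmt9_general G k₁ k₂ hk A B hdec hstar
end
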